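/- arXiv:1801.02531 — 4 statements merged into one kernel-verified Lean document; each statement's English description precedes it below -/
import Mathlib

section
/- No double-spending among valid transactions: if tx_i and tx_{i'} are two distinct valid transactions, then Source_i ∩ Source_{i'} = ∅. In particular, each unspent transaction can be consumed by at most one valid transaction. -/
/-- **No double-spending among valid transactions.**
All transactions spending a given source live on one chain with a total order,
modeled by an injective position map `pos : Tx → ℕ` (lexicographic position
`(k,l)` on the owner's chain, encoded as a natural number).  Validity requires
the double-spend check: a valid transaction `t` has no source shared with a
valid transaction strictly preceding it (`hDS`).  Then two distinct valid
transactions have disjoint source sets; in particular each unspent transaction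
can be consumed by at most one valid transaction. -/
theorem no_double_spending {Tx : Type}
    (Source : Tx → Set Tx) (Valid : Tx → Prop)
    (pos : Tx → ℕ) (hpos : Function.Injective pos)
    (hDS : ∀ t, Valid t → ∀ s ∈ Source t,
      ¬ ∃ t', Valid t' ∧ s ∈ Source t' ∧ pos t' < pos t) :
    (∀ t t', Valid t → Valid t' → t ≠ t' → Source t ∩ Source t' = ∅) ∧
    (∀ s : Tx, ∀ t t', Valid t → Valid t' → s ∈ Source t → s ∈ Source t' → t = t') := by
  have key : ∀ s : Tx, ∀ t t', Valid t → Valid t' → s ∈ Source t → s ∈ Source t' → t = t' := by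
    intro s t t' ht ht' hs hs'
    by_contra hne
    have hp : pos t ≠ pos t' := fun h => hne (hpos h)
    rcases lt_or_gt_of_ne hp with h | h
    · exact hDS t' ht' s hs' ⟨t, ht, hs, h⟩
    · exact hDS t ht s hs ⟨t', ht', hs', h⟩
  refine ⟨fun t t' ht ht' hne => ?_, key⟩
  ext s
  simp only [Set.mem_inter_iff, Set.mem_empty_iff_false, iff_false]
  rintro ⟨h1, h2⟩
  exact hne (key s t t' ht ht' h1 h2)
end

section
/- Feasibility of proof collection: under the History Disinterest and Rational Owner assumptions, if a node u is curious about a valid transaction tx_i, then there exists a node v (the receiver of some unspent valid transaction tx_j with P(tx_i) ⊆ P(tx_j), possibly tx_j = tx_i) that will provide a validity proof containing P(tx_i). -/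
/-- **Feasibility of proof collection.**
Assumptions: (History Disinterest) if a node `u` is curious about a spent
transaction `t`, then there is a valid unspent transaction `t'` that `u` is
curious about of which `t` is an ancestor under the source relation;
(Rational Owner) the receiver of any valid unspent transaction provides its
validity proof upon request; and the monotonicity lemma `P t ⊆ P t'` whenever
`t` is an ancestor of `t'`.  Then whenever a node `u` is curious about a valid
transaction `t`, there exists a node `v` — the receiver of some valid unspent
transaction `t'` whose proof contains `P t` (possibly `t' = t`) — that provides
a validity proof containing `P t`. -/
theorem proof_collection_feasible {Node Tx Block : Type}
    (Source : Tx → Set Tx) (P : Tx → Set Block)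
    (Valid Spent : Tx → Prop) (receiver : Tx → Node)
    (Curious : Node → Tx → Prop) (Provides : Node → Set Block → Prop)
    (hHD : ∀ (u : Node) (t : Tx), Curious u t → Spent t →
      ∃ t', ¬ Spent t' ∧ Valid t' ∧ Curious u t' ∧
        Relation.ReflTransGen (fun x y => x ∈ Source y) t t')
    (hRO : ∀ t : Tx, Valid t → ¬ Spent t → Provides (receiver t) (P t))
    (hMono : ∀ t t' : Tx,
      Relation.ReflTransGen (fun x y => x ∈ Source y) t t' → P t ⊆ P t')
    (u : Node) (t : Tx) (hc : Curious u t) (hv : Valid t) :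
    ∃ (v : Node) (t' : Tx), Valid t' ∧ ¬ Spent t' ∧ v = receiver t' ∧
      Provides v (P t') ∧ P t ⊆ P t' := by
  by_cases hs : Spent t
  · obtain ⟨t', hns, hv', _, hrel⟩ := hHD u t hc hs
    exact ⟨receiver t', t', hv', hns, rfl, hRO t' hv' hns, hMono t t' hrel⟩
  · exact ⟨receiver t, t, hv, hs, rfl, hRO t hv hs, subset_rfl⟩
end

section
/- If the transaction pattern graph is partitioned into shards of size g and all transactions are intra-shard, then the validity proof of any transaction contains only blocks from chains of nodes within the sender's shard; hence |{v : some block of v's chain is in P(tx)}| ≤ g for every transaction tx. -/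
/-- **Intra-shard transaction patterns confine validity proofs to the shard.**
Nodes are partitioned into shards via `shard : Node → Shard`, with each shard
containing at most `g` nodes.  Every transaction's sender and receiver lie in
the same shard, and every source of a transaction is a transaction whose sender
lies in the same shard (intra-shard assumption).  Each block on a node's chain
prefix is owned by that node, and the proof `P` satisfies the recursive
definition (sender's chain prefix union the proofs of all sources), with the
source relation well-founded.  Then every block in `P tx` belongs to a node in
the sender's shard, and hence at most `g` nodes have some block of their chain
in `P tx`. -/
theorem intra_shard_proof_bound {Node Shard Tx Block : Type} [Fintype Node]
    (shard : Node → Shard) (g : ℕ)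
    (sender receiver : Tx → Node) (owner : Block → Node)
    (Source : Tx → Set Tx) (chainPrefix : Tx → Set Block) (P : Tx → Set Block)
    (hwf : WellFounded (fun s t : Tx => s ∈ Source t))
    (hShardSize : ∀ sh : Shard, {n : Node | shard n = sh}.ncard ≤ g)
    (hSendRecv : ∀ t : Tx, shard (sender t) = shard (receiver t))
    (hIntraSrc : ∀ t : Tx, ∀ s ∈ Source t, shard (sender s) = shard (sender t))
    (hOwner : ∀ t : Tx, ∀ b ∈ chainPrefix t, owner b = sender t)
    (hP : ∀ t, P t = chainPrefix t ∪ ⋃ s ∈ Source t, P s) :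
    ∀ tx : Tx,
      (∀ b ∈ P tx, shard (owner b) = shard (sender tx)) ∧
      {v : Node | ∃ b ∈ P tx, owner b = v}.ncard ≤ g := by
  have key : ∀ tx : Tx, ∀ b ∈ P tx, shard (owner b) = shard (sender tx) := by
    intro tx
    induction tx using hwf.induction with
    | _ tx ih =>
      intro b hb
      rw [hP tx] at hb
      rcases hb with hb | hb
      · rw [hOwner tx b hb]
      · simp only [Set.mem_iUnion] at hb
        obtain ⟨s, hs, hbs⟩ := hb
        rw [ih s hs b hbs, hIntraSrc tx s hs]
  intro tx
  refine ⟨key tx, ?_⟩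
  calc {v : Node | ∃ b ∈ P tx, owner b = v}.ncard
      ≤ {n : Node | shard n = shard (sender tx)}.ncard := by
        apply Set.ncard_le_ncard
        · rintro v ⟨b, hb, rfl⟩
          exact key tx b hb
        · exact Set.toFinite _
    _ ≤ g := hShardSize _
end

section
/- Uniqueness of the confirming prefix: if two sets of blocks both pass the proof-verification algorithm for the same transaction tx at position (k,l) on node u's chain with respect to the same main chain (same set of committed abstracts), then they contain identical blocks B_{u,1}, ..., B_{u,k'} for u's chain up to the confirming abstract index k'. -/
/-!
A block determines, through its `prevHash` field, the hash of its predecessor, so by injectivity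
of `H` it determines its predecessor. The confirming block `B k'` is pinned down by the hash
committed on the main chain, hence so is every block below it, by descending induction.
-/

/-- A block: hash of previous block plus a list of transactions. -/
structure Block (Tx : Type) where
  prevHash : ℕ
  txs : List Tx

def HashLinked {Tx : Type} (H : Block Tx → ℕ) (B : ℕ → Block Tx) (n : ℕ) : Prop :=
  ∀ m, 1 < m → m ≤ n → (B m).prevHash = H (B (m - 1))

namespace HashLinked

variable {Tx : Type} {H : Block Tx → ℕ} {B B' : ℕ → Block Tx} {n : ℕ}

theorem eq_pred_of_eq (hH : Function.Injective H) (hB : HashLinked H B n)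
    (hB' : HashLinked H B' n) {m : ℕ} (hm : 1 ≤ m) (hmn : m < n) (h : B (m + 1) = B' (m + 1)) :
    B m = B' m := by
  have link := hB (m + 1) (by omega) hmn
  have link' := hB' (m + 1) (by omega) hmn
  rw [Nat.add_sub_cancel] at link link'
  exact hH (by rw [← link, ← link', h])

theorem eq_of_eq_top (hH : Function.Injective H) (hB : HashLinked H B n)
    (hB' : HashLinked H B' n) (htop : B n = B' n) :
    ∀ m, 1 ≤ m → m ≤ n → B m = B' m := by
  intro m hm hmn
  induction hmn using Nat.decreasingInduction with
  | self => exact htop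
  | of_succ m hmn ih => exact eq_pred_of_eq hH hB hB' hm hmn (ih (by omega))

end HashLinked

theorem confirming_prefix_unique_general {Node Tx : Type}
    (H : Block Tx → ℕ) (hH : Function.Injective H)
    (mainChain : Node × ℕ → Option ℕ)
    (u : Node) (k' : ℕ)
    (B B' : ℕ → Block Tx)
    (hlinks : ∀ m, 1 < m → m ≤ k' → (B m).prevHash = H (B (m - 1)))
    (hlinks' : ∀ m, 1 < m → m ≤ k' → (B' m).prevHash = H (B' (m - 1)))
    (hcommit : mainChain (u, k') = some (H (B k')))
    (hcommit' : mainChain (u, k') = some (H (B' k'))) :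
    ∀ m, 1 ≤ m → m ≤ k' → B m = B' m := by
  have htop : B k' = B' k' := hH (Option.some.inj (hcommit.symm.trans hcommit'))
  exact HashLinked.eq_of_eq_top hH hlinks hlinks' htop

/-- **Uniqueness of the confirming prefix.**
The main chain is a fixed map from `(node, index)` to committed hashes, and `H`
is injective.  If two chains of blocks `B, B'` for node `u` both pass the
proof-verification algorithm for the same transaction `tx` at position `(k, l)`
— i.e. both have correct hash links up to the confirming index `k'`, the hash of
each `k'`-th block agrees with the abstract committed on the main chain at
`(u, k')`, `tx` occurs as the `l`-th transaction of the `k`-th block, and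
`k ≤ k'` — then the two chains contain identical blocks `B_{u,1}, …, B_{u,k'}`. -/
theorem confirming_prefix_unique {Node Tx : Type}
    (H : Block Tx → ℕ) (hH : Function.Injective H)
    (mainChain : Node × ℕ → Option ℕ)
    (u : Node) (k k' l : ℕ) (hk : 1 ≤ k) (hkk' : k ≤ k') (tx : Tx)
    (B B' : ℕ → Block Tx)
    (hlinks : ∀ m, 1 < m → m ≤ k' → (B m).prevHash = H (B (m - 1)))
    (hlinks' : ∀ m, 1 < m → m ≤ k' → (B' m).prevHash = H (B' (m - 1)))
    (hcommit : mainChain (u, k') = some (H (B k')))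
    (hcommit' : mainChain (u, k') = some (H (B' k')))
    (htx : (B k).txs[l]? = some tx)
    (htx' : (B' k).txs[l]? = some tx) :
    ∀ m, 1 ≤ m → m ≤ k' → B m = B' m :=
  confirming_prefix_unique_general H hH mainChain u k' B B' hlinks hlinks' hcommit hcommit'
end
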